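/- Let E be a real inner product space, K a complete subspace of E with orthogonal projection P_K, s, n ∈ K with ⟨s, n⟩ = 0 and s ≠ 0, and a ∈ E with P_K a = 0 and a ≠ 0. Let ε ≥ 0, set ŝ = s + ε·n + a and y = s + n, and define SAR(x) = 10·log₁₀(‖P_K x‖² / ‖x − P_K x‖²) whenever P_K x ≠ 0 and x − P_K x ≠ 0. Then ⟨ŝ, y⟩ > 0, and consequently for every ω > 0, SAR(ŝ + ω·y) > SAR(ŝ). -/

import Mathlib

open scoped RealInnerProductSpace

/-! Because `y ∈ K`, adding `ω • y` moves the projection `P_K x` to `P_K x + ω • y` and leaves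
the residual `x - P_K x` unchanged, so only the numerator of the SAR changes, and
`‖P_K x + ω • y‖² = ‖P_K x‖² + 2ω⟪x, y⟫ + ω²‖y‖²` grows as soon as `⟪x, y⟫ > 0` (the paper's
Proposition 1). For the model `ŝ = s + ε • n + a`, the residual is `a ≠ 0` and
`⟪ŝ, s + n⟫ = ‖s‖² + ε‖n‖² > 0`. -/

/-- Signal-to-artifact ratio: `SAR(x) = 10·log₁₀(‖P_K x‖² / ‖x − P_K x‖²)`. -/
noncomputable def SAR {E : Type*} [NormedAddCommGroup E] [InnerProductSpace ℝ E]
    (K : Submodule ℝ E) [CompleteSpace K] (x : E) : ℝ :=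
  10 * Real.logb 10 (‖(Submodule.orthogonalProjectionOnto K x : E)‖ ^ 2 /
    ‖x - (Submodule.orthogonalProjectionOnto K x : E)‖ ^ 2)

section

variable {E : Type*} [NormedAddCommGroup E] [InnerProductSpace ℝ E]

theorem norm_lt_norm_add_smul_of_inner_pos {u v : E} (huv : 0 < ⟪u, v⟫) {ω : ℝ}
    (hω : 0 < ω) : ‖u‖ < ‖u + ω • v‖ := by
  rw [← sq_lt_sq₀ (norm_nonneg _) (norm_nonneg _), norm_add_sq_real, inner_smul_right,
    norm_smul, Real.norm_of_nonneg hω.le]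
  nlinarith [sq_nonneg (ω * ‖v‖)]

theorem add_notMem_of_mem_orthogonal {K : Submodule ℝ E} {k a : E} (hk : k ∈ K) (ha : a ∈ Kᗮ)
    (ha0 : a ≠ 0) : k + a ∉ K := fun hka =>
  ha0 <| Submodule.disjoint_def.mp K.orthogonal_disjoint a
    (by simpa using K.sub_mem hka hk) ha

variable (K : Submodule ℝ E) [CompleteSpace K]

theorem SAR_eq_starProjection (x : E) :
    SAR K x = 10 * Real.logb 10 (‖K.starProjection x‖ ^ 2 / ‖x - K.starProjection x‖ ^ 2) :=
  rfl

theorem SAR_lt_SAR_add_smul {x y : E} (hx : x ∉ K) (hy : y ∈ K) (hxy : 0 < ⟪x, y⟫) {ω : ℝ}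
    (hω : 0 < ω) : SAR K x < SAR K (x + ω • y) := by
  set p := K.starProjection x
  have hproj : K.starProjection (x + ω • y) = p + ω • y := by
    rw [map_add, map_smul, K.starProjection_eq_self_iff.mpr hy]
  have hpy : ⟪p, y⟫ = ⟪x, y⟫ := by
    rw [K.inner_starProjection_left_eq_right, K.starProjection_eq_self_iff.mpr hy]
  have hp : 0 < ‖p‖ ^ 2 := by
    have hp0 : p ≠ 0 := by rintro h; rw [h, inner_zero_left] at hpy; linarith
    positivity
  have hr : 0 < ‖x - p‖ ^ 2 := by
    have hr0 : x - p ≠ 0 := sub_ne_zero.mpr fun h => hx (K.starProjection_eq_self_iff.mp h.symm)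
    positivity
  rw [SAR_eq_starProjection, SAR_eq_starProjection, hproj,
    show x + ω • y - (p + ω • y) = x - p by abel]
  gcongr
  · norm_num
  · exact norm_lt_norm_add_smul_of_inner_pos (hpy ▸ hxy) hω

end

/-- For an enhanced signal `ŝ = s + ε·n + a` with `s, n ∈ K` orthogonal, `s ≠ 0`,
artifact `a` orthogonal to `K` with `a ≠ 0`, and `ε ≥ 0`, the condition
`⟨ŝ, y⟩ > 0` holds for the observation `y = s + n`, and consequently observation
adding strictly improves the SAR for every `ω > 0`. -/
theorem observation_adding_improves_SAR_of_model
    {E : Type*} [NormedAddCommGroup E] [InnerProductSpace ℝ E]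
    (K : Submodule ℝ E) [CompleteSpace K]
    (s n a : E) (hs : s ∈ K) (hn : n ∈ K) (hsn : ⟪s, n⟫ = 0) (hs0 : s ≠ 0)
    (ha : (Submodule.orthogonalProjectionOnto K a : E) = 0) (ha0 : a ≠ 0)
    (ε : ℝ) (hε : ε ≥ 0) :
    ⟪s + ε • n + a, s + n⟫ > 0 ∧
    ∀ ω : ℝ, ω > 0 →
      SAR K ((s + ε • n + a) + ω • (s + n)) > SAR K (s + ε • n + a) := by
  have haK : a ∈ Kᗮ := K.orthogonalProjectionOnto_eq_zero_iff.mp (Submodule.coe_eq_zero.mp ha)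
  have hinner : ⟪s + ε • n + a, s + n⟫ = ‖s‖ ^ 2 + ε * ‖n‖ ^ 2 := by
    simp only [inner_add_left, inner_add_right, real_inner_smul_left, real_inner_self_eq_norm_sq,
      hsn, real_inner_comm s n, K.inner_left_of_mem_orthogonal hs haK,
      K.inner_left_of_mem_orthogonal hn haK]
    ring
  have hpos : ⟪s + ε • n + a, s + n⟫ > 0 := by
    rw [hinner]
    have hs_pos : 0 < ‖s‖ := norm_pos_iff.mpr hs0
    positivity
  refine ⟨hpos, fun ω hω => SAR_lt_SAR_add_smul K ?_ (K.add_mem hs hn) hpos hω⟩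
  exact add_notMem_of_mem_orthogonal (K.add_mem hs (K.smul_mem ε hn)) haK ha0
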